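/- Fix an integer k ≥ 1. Let p ∈ Q^{k−2,k−2}[x,y], t̃ ∈ P^{k−2}[x], s̃ ∈ P^{k−2}[y] be polynomials and let χ ∈ Q^{k−1,k−1,k−2}_{k+2}. Set r = x(1−x)y(1−y)p(x,y), t = x(1−x)t̃(x), s = y(1−y)s̃(y), and define u : Ω∞° → ℝ³ by u(x,y,z) = (z^{k−1}/(1+z)^{k+2})·( ∂r/∂y + 2t, ∂r/∂x + 2s, (1+z)(∂²r/∂x∂y + ∂s/∂y + ∂t/∂x) ) + (0, 0, z·χ(x,y,z)). If div u = 0 at every point of Ω∞°, then u = 0 on Ω∞° (indeed p = 0, t̃ = 0, s̃ = 0 and χ = 0). In other words, the divergence operator is injective on the space U^{(2),k}_{0,div}(Ω∞) of all functions of this form. -/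

import Mathlib

noncomputable section

/-- The interior `Ω∞° = (0,1) × (0,1) × (0,∞)` of the infinite pyramid. -/
def PyrInfInt : Set (ℝ × ℝ × ℝ) :=
  {p | 0 < p.1 ∧ p.1 < 1 ∧ 0 < p.2.1 ∧ p.2.1 < 1 ∧ 0 < p.2.2}

/-- The weighted monomial `x^a y^b z^c / (1+z)^k`. -/
def qmon (k a b c : ℕ) : ℝ × ℝ × ℝ → ℝ :=
  fun p => p.1 ^ a * p.2.1 ^ b * p.2.2 ^ c / (1 + p.2.2) ^ k

/-- The space `Q^{l,m,n}_k`. -/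
def Qsp (l m n : ℤ) (k : ℕ) : Submodule ℝ ((ℝ × ℝ × ℝ) → ℝ) :=
  Submodule.span ℝ
    {f | ∃ a b c : ℕ, (a : ℤ) ≤ l ∧ (b : ℤ) ≤ m ∧ (c : ℤ) ≤ n ∧ f = qmon k a b c}

/-- The divergence of a vector field at a point. -/
def div3 (f : ℝ × ℝ × ℝ → ℝ × ℝ × ℝ) (p : ℝ × ℝ × ℝ) : ℝ :=
  fderiv ℝ (fun q => (f q).1) p ((1 : ℝ), (0 : ℝ), (0 : ℝ)) +
  fderiv ℝ (fun q => (f q).2.1) p ((0 : ℝ), (1 : ℝ), (0 : ℝ)) +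
  fderiv ℝ (fun q => (f q).2.2) p ((0 : ℝ), (0 : ℝ), (1 : ℝ))

/-- `x(1−x)y(1−y)·p` as a polynomial in two variables. -/
def bub2 (p : MvPolynomial (Fin 2) ℝ) : MvPolynomial (Fin 2) ℝ :=
  MvPolynomial.X 0 * (1 - MvPolynomial.X 0) * MvPolynomial.X 1 * (1 - MvPolynomial.X 1) * p

/-- `x(1−x)·t̃` as a polynomial in one variable. -/
def bub1 (t : Polynomial ℝ) : Polynomial ℝ := Polynomial.X * (1 - Polynomial.X) * t

/-- The generic element of `U^{(2),k}_{0,div}(Ω∞)` determined by `p ∈ Q^{k−2,k−2}[x,y]`,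
`t̃ ∈ P^{k−2}[x]`, `s̃ ∈ P^{k−2}[y]` and `χ ∈ Q^{k−1,k−1,k−2}_{k+2}`: with
`r = x(1−x)y(1−y)p`, `t = x(1−x)t̃`, `s = y(1−y)s̃`, the field
`(z^{k−1}/(1+z)^{k+2})·(r_y + 2t, r_x + 2s, (1+z)(r_{xy} + s_y + t_x)) + (0,0,z·χ)`. -/
def U2divFun (k : ℕ) (p : MvPolynomial (Fin 2) ℝ) (t s : Polynomial ℝ)
    (χ : (ℝ × ℝ × ℝ) → ℝ) : ℝ × ℝ × ℝ → ℝ × ℝ × ℝ :=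
  fun q =>
    (q.2.2 ^ (k - 1) / (1 + q.2.2) ^ (k + 2)) •
      (MvPolynomial.eval ![q.1, q.2.1] (MvPolynomial.pderiv 1 (bub2 p)) +
         2 * (bub1 t).eval q.1,
       MvPolynomial.eval ![q.1, q.2.1] (MvPolynomial.pderiv 0 (bub2 p)) +
         2 * (bub1 s).eval q.2.1,
       (1 + q.2.2) *
         (MvPolynomial.eval ![q.1, q.2.1]
            (MvPolynomial.pderiv 0 (MvPolynomial.pderiv 1 (bub2 p))) +
          (Polynomial.derivative (bub1 s)).eval q.2.1 +
          (Polynomial.derivative (bub1 t)).eval q.1)) +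
    ((0 : ℝ), (0 : ℝ), q.2.2 * χ q)

/-- Degree constraints for the data of `U^{(2),k}_{0,div}(Ω∞)` (bounds in `ℤ`, so a
negative bound forces the corresponding polynomial to vanish); membership of `χ` in
`Q^{k−1,k−1,k−2}_{k+2}` is recorded separately. -/
def U2divBounds (k : ℕ) (p : MvPolynomial (Fin 2) ℝ) (t s : Polynomial ℝ) : Prop :=
  (∀ d ∈ p.support, (d 0 : ℤ) ≤ (k : ℤ) - 2 ∧ (d 1 : ℤ) ≤ (k : ℤ) - 2) ∧
  (∀ n ∈ t.support, (n : ℤ) ≤ (k : ℤ) - 2) ∧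
  (∀ n ∈ s.support, (n : ℤ) ≤ (k : ℤ) - 2)

/-!
For `k = 1` the degree bounds leave nothing but zero. For `k = m + 2` fix `(x, y)` in the unit
square and put `a = r_xy + s_y + t_x`, `χ(x, y, z) = γ(z) / (1 + z)^(m+4)` with `deg γ ≤ m`. The
divergence is then `D(z) / (1 + z)^(m+5)` for an explicit polynomial `D` (`divNumerator`), so
`D = 0`. Reading the coefficients of `D` from the bottom up, the numerator `a z^m (1 + z) + γ` of
`u₃ / z` vanishes to order `m + 1`, and the coefficient of `z^(m+1)` then says `(m + 4) a = 0`;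
hence `a = 0` and `γ = 0`. So `∂x ∂y (r + y t + x s) = 0`, and since `r + y t + x s` vanishes on
both axes it is zero; restricting it to `x = 1` and to `y = 1` gives `s = t = 0`, and then `p = 0`.
-/

open scoped Polynomial

namespace MvPolynomial

theorem pderiv_pderiv_comm {σ R : Type*} [CommSemiring R] (i j : σ) (f : MvPolynomial σ R) :
    pderiv i (pderiv j f) = pderiv j (pderiv i f) := by
  classical
  induction f using MvPolynomial.induction_on with
  | C a => simp
  | add f g hf hg => simp [hf, hg]
  | mul_X f n ih =>
    simp only [pderiv_mul, map_add, pderiv_X, ih, Pi.single_apply]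
    split_ifs <;> simp; ring

theorem hasDerivAt_eval_update {σ 𝕜 : Type*} [NontriviallyNormedField 𝕜] [DecidableEq σ]
    (f : MvPolynomial σ 𝕜) (v : σ → 𝕜) (i : σ) :
    HasDerivAt (fun x => eval (Function.update v i x) f) (eval v (pderiv i f)) (v i) := by
  induction f using MvPolynomial.induction_on with
  | C a => simpa using hasDerivAt_const (v i) a
  | add f g hf hg => simpa using hf.fun_add hg
  | mul_X f j ih =>
    have hX : HasDerivAt (fun x => Function.update v i x j) ((Pi.single i 1 : σ → 𝕜) j) (v i) := by
      rcases eq_or_ne j i with rfl | hji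
      · simpa using hasDerivAt_id' (v j)
      · simpa [hji] using hasDerivAt_const (v i) (v j)
    have h := ih.fun_mul hX
    simp only [Function.update_eq_self] at h
    simp only [map_mul, eval_X]
    refine h.congr_deriv ?_
    by_cases hji : j = i <;> simp [pderiv_X, hji, mul_comm, add_comm]

theorem hasDerivAt_eval_vecCons_fst {𝕜 : Type*} [NontriviallyNormedField 𝕜]
    (f : MvPolynomial (Fin 2) 𝕜) (x y : 𝕜) :
    HasDerivAt (fun x => eval ![x, y] f) (eval ![x, y] (pderiv 0 f)) x := by
  have e (x' : 𝕜) : Function.update ![x, y] 0 x' = ![x', y] := by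
    ext i; fin_cases i <;> rfl
  have h := hasDerivAt_eval_update f ![x, y] 0
  simp only [e] at h
  exact h

theorem hasDerivAt_eval_vecCons_snd {𝕜 : Type*} [NontriviallyNormedField 𝕜]
    (f : MvPolynomial (Fin 2) 𝕜) (x y : 𝕜) :
    HasDerivAt (fun y => eval ![x, y] f) (eval ![x, y] (pderiv 1 f)) y := by
  have e (y' : 𝕜) : Function.update ![x, y] 1 y' = ![x, y'] := by
    ext i; fin_cases i <;> rfl
  have h := hasDerivAt_eval_update f ![x, y] 1
  simp only [e] at h
  exact h

theorem differentiable_eval_vecCons (f : MvPolynomial (Fin 2) ℝ) :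
    Differentiable ℝ (fun q : ℝ × ℝ × ℝ => eval ![q.1, q.2.1] f) := by
  simp only [eval_eq', Fin.prod_univ_two, Matrix.cons_val_zero, Matrix.cons_val_one]
  fun_prop

theorem eq_zero_of_eval_vecCons_eq_zero {R : Type*} [CommRing R] [IsDomain R]
    {f : MvPolynomial (Fin 2) R} {S T : Set R} (hS : S.Infinite) (hT : T.Infinite)
    (h : ∀ x ∈ S, ∀ y ∈ T, eval ![x, y] f = 0) : f = 0 := by
  refine funext_set ![S, T] (fun i => by fin_cases i <;> assumption) fun v hv => ?_
  have hv' : v = ![v 0, v 1] := by ext i; fin_cases i <;> rfl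
  rw [hv', h _ (hv 0 trivial) _ (hv 1 trivial), map_zero]

theorem eq_zero_of_pderiv_pderiv_eq_zero {f : MvPolynomial (Fin 2) ℝ}
    (h : pderiv 0 (pderiv 1 f) = 0) (h₀ : ∀ x, eval ![x, 0] f = 0)
    (h₁ : ∀ y, eval ![0, y] f = 0) : f = 0 := by
  have hfx (x y : ℝ) : eval ![x, y] (pderiv 0 f) = eval ![x, 0] (pderiv 0 f) :=
    is_const_of_deriv_eq_zero (fun y => (hasDerivAt_eval_vecCons_snd _ x y).differentiableAt)
      (fun y => by rw [(hasDerivAt_eval_vecCons_snd _ x y).deriv, pderiv_pderiv_comm, h, map_zero])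
      y 0
  have hf (x y : ℝ) : eval ![x, y] f - eval ![x, 0] f = eval ![0, y] f - eval ![0, 0] f := by
    have hd (x : ℝ) := (hasDerivAt_eval_vecCons_fst f x y).sub (hasDerivAt_eval_vecCons_fst f x 0)
    exact is_const_of_deriv_eq_zero (fun x => (hd x).differentiableAt)
      (fun x => by rw [(hd x).deriv, hfx, sub_self]) x 0
  refine MvPolynomial.funext fun v => ?_
  have hv : v = ![v 0, v 1] := by ext i; fin_cases i <;> rfl
  have := hf (v 0) (v 1)
  rw [h₀, h₁, h₀, sub_zero, sub_zero] at this
  rw [hv, this, map_zero]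

end MvPolynomial

namespace Polynomial

theorem pderiv_toMvPolynomial_self {σ R : Type*} [CommSemiring R] (i : σ) (P : R[X]) :
    MvPolynomial.pderiv i (P.toMvPolynomial i) = (derivative P).toMvPolynomial i := by
  induction P using Polynomial.induction_on' with
  | add P Q hP hQ => simp [hP, hQ]
  | monomial n a => simp [toMvPolynomial, aeval_monomial, derivative_monomial, mul_assoc]

theorem pderiv_toMvPolynomial_of_ne {σ R : Type*} [CommSemiring R] {i j : σ} (h : i ≠ j)
    (P : R[X]) : MvPolynomial.pderiv j (P.toMvPolynomial i) = 0 := by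
  induction P using Polynomial.induction_on' with
  | add P Q hP hQ => simp [hP, hQ]
  | monomial n a => simp [toMvPolynomial, aeval_monomial, MvPolynomial.pderiv_X_of_ne h]

theorem coeff_X_mul_derivative {R : Type*} [Semiring R] (P : R[X]) (j : ℕ) :
    (X * derivative P).coeff j = P.coeff j * j := by
  cases j with
  | zero => simp
  | succ j => rw [coeff_X_mul, coeff_derivative, Nat.cast_succ]

theorem hasDerivAt_eval_div_one_add_pow (P : ℝ[X]) (N : ℕ) {z : ℝ} (hz : 1 + z ≠ 0) :
    HasDerivAt (fun z => P.eval z / (1 + z) ^ N)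
      (((1 + z) * (derivative P).eval z - N * P.eval z) / (1 + z) ^ (N + 1)) z := by
  refine ((P.hasDerivAt z).fun_div (((hasDerivAt_id' z).const_add 1).fun_pow N)
    (pow_ne_zero N hz)).congr_deriv ?_
  rcases N with _ | n
  · field_simp; simp
  · field_simp
    simp only [Nat.add_sub_cancel]
    ring

end Polynomial

theorem div3_eq_of_hasDerivAt {f : ℝ × ℝ × ℝ → ℝ × ℝ × ℝ} {x y z d₁ d₂ d₃ : ℝ}
    (hf : DifferentiableAt ℝ f (x, y, z))
    (h₁ : HasDerivAt (fun x => (f (x, y, z)).1) d₁ x)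
    (h₂ : HasDerivAt (fun y => (f (x, y, z)).2.1) d₂ y)
    (h₃ : HasDerivAt (fun z => (f (x, y, z)).2.2) d₃ z) :
    div3 f (x, y, z) = d₁ + d₂ + d₃ := by
  have e₁ := hf.fst.hasFDerivAt.comp_hasDerivAt x
    ((hasDerivAt_id x).prodMk ((hasDerivAt_const x y).prodMk (hasDerivAt_const x z)))
  have e₂ := hf.snd.fst.hasFDerivAt.comp_hasDerivAt y
    ((hasDerivAt_const y x).prodMk ((hasDerivAt_id y).prodMk (hasDerivAt_const y z)))
  have e₃ := hf.snd.snd.hasFDerivAt.comp_hasDerivAt z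
    ((hasDerivAt_const z x).prodMk ((hasDerivAt_const z y).prodMk (hasDerivAt_id z)))
  rw [div3, e₁.unique h₁, e₂.unique h₂, e₃.unique h₃]

section divNumerator

open Polynomial

/- For `k = m + 2`, `a = r_xy + s_y + t_x` and `χ(x, y, z) = γ(z) / (1 + z)^(m+4)`, the third
component of `U2divFun k` is `z · u3Numerator m a γ / (1 + z)^(m+4)` and its divergence is
`divNumerator m a γ / (1 + z)^(m+5)`. -/

def u3Numerator (m : ℕ) (a : ℝ) (γ : ℝ[X]) : ℝ[X] := C a * X ^ m * (1 + X) + γ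

def divNumerator (m : ℕ) (a : ℝ) (γ : ℝ[X]) : ℝ[X] :=
  C (2 * a) * X ^ (m + 1) * (1 + X) + (1 + X) * derivative (X * u3Numerator m a γ)
    - C ((m : ℝ) + 4) * (X * u3Numerator m a γ)

variable {m : ℕ} {a : ℝ} {γ : ℝ[X]}

theorem divNumerator_eq : divNumerator m a γ =
    C (2 * a) * X ^ (m + 1) + C (2 * a) * X ^ (m + 2) + u3Numerator m a γ
      + X * derivative (u3Numerator m a γ)
      + X * (u3Numerator m a γ + X * derivative (u3Numerator m a γ))
      - C ((m : ℝ) + 4) * (X * u3Numerator m a γ) := by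
  rw [divNumerator, derivative_mul, derivative_X]; ring

theorem coeff_divNumerator_zero :
    (divNumerator m a γ).coeff 0 = (u3Numerator m a γ).coeff 0 := by
  rw [divNumerator_eq]; simp

theorem coeff_divNumerator_succ (j : ℕ) :
    (divNumerator m a γ).coeff (j + 1) =
      2 * a * ((if j = m then 1 else 0) + (if j = m + 1 then 1 else 0))
        + (j + 2) * (u3Numerator m a γ).coeff (j + 1)
        - ((m : ℝ) + 3 - j) * (u3Numerator m a γ).coeff j := by
  rw [divNumerator_eq]
  simp only [coeff_add, coeff_sub, coeff_C_mul, coeff_X_pow, coeff_X_mul, coeff_X_mul_derivative,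
    coeff_derivative]
  push_cast
  ring

theorem coeff_u3Numerator_succ (hγ : ∀ j, m < j → γ.coeff j = 0) :
    (u3Numerator m a γ).coeff (m + 1) = a := by
  simp [u3Numerator, mul_add, coeff_X_pow, hγ (m + 1) (by omega)]

theorem coeff_u3Numerator_eq_zero_of_divNumerator_eq_zero (h : divNumerator m a γ = 0) :
    ∀ j ≤ m, (u3Numerator m a γ).coeff j = 0 := by
  intro j hj
  induction j with
  | zero => rw [← coeff_divNumerator_zero, h, coeff_zero]
  | succ j ih =>
    have hrec := coeff_divNumerator_succ (m := m) (a := a) (γ := γ) j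
    rw [h, coeff_zero, if_neg (by omega), if_neg (by omega), ih (by omega)] at hrec
    have hj2 : (j + 2 : ℝ) ≠ 0 := by positivity
    exact (mul_eq_zero.1 (by linarith)).resolve_left hj2

theorem eq_zero_of_divNumerator_eq_zero (hγ : ∀ j, m < j → γ.coeff j = 0)
    (h : divNumerator m a γ = 0) : a = 0 ∧ γ = 0 := by
  have hlow := coeff_u3Numerator_eq_zero_of_divNumerator_eq_zero h
  have ha : a = 0 := by
    have hrec := coeff_divNumerator_succ (m := m) (a := a) (γ := γ) m
    rw [h, coeff_zero, if_pos rfl, if_neg (by omega), hlow m le_rfl,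
      coeff_u3Numerator_succ hγ] at hrec
    have hm4 : ((m : ℝ) + 4) * a = 0 := by linarith
    exact (mul_eq_zero.1 hm4).resolve_left (by positivity)
  refine ⟨ha, Polynomial.ext fun j => ?_⟩
  rcases le_or_gt j m with hj | hj
  · simpa [u3Numerator, ha] using hlow j hj
  · exact hγ j hj

end divNumerator

section U2div

open MvPolynomial

/-- `r + y t + x s`: its mixed derivative `r_xy + s_y + t_x` is the bracket in the third
component of `U2divFun`. -/
def U2divPot (p : MvPolynomial (Fin 2) ℝ) (t s : ℝ[X]) : MvPolynomial (Fin 2) ℝ :=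
  bub2 p + (bub1 t).toMvPolynomial 0 * X 1 + (bub1 s).toMvPolynomial 1 * X 0

theorem eval_pderiv_pderiv_U2divPot (p : MvPolynomial (Fin 2) ℝ) (t s : ℝ[X]) (x y : ℝ) :
    eval ![x, y] (pderiv 0 (pderiv 1 (U2divPot p t s))) =
      eval ![x, y] (pderiv 0 (pderiv 1 (bub2 p))) + (Polynomial.derivative (bub1 s)).eval y
        + (Polynomial.derivative (bub1 t)).eval x := by
  simp [U2divPot, Polynomial.pderiv_toMvPolynomial_self, Polynomial.pderiv_toMvPolynomial_of_ne,
    eval_toMvPolynomial]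
  ring

theorem U2divPot_eq_zero_of_pderiv_pderiv {p : MvPolynomial (Fin 2) ℝ} {t s : ℝ[X]}
    (h : pderiv 0 (pderiv 1 (U2divPot p t s)) = 0) : U2divPot p t s = 0 :=
  eq_zero_of_pderiv_pderiv_eq_zero h (fun x => by simp [U2divPot, bub1, bub2, eval_toMvPolynomial])
    (fun y => by simp [U2divPot, bub1, bub2, eval_toMvPolynomial])

theorem eq_zero_of_U2divPot_eq_zero {p : MvPolynomial (Fin 2) ℝ} {t s : ℝ[X]}
    (h : U2divPot p t s = 0) : p = 0 ∧ t = 0 ∧ s = 0 := by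
  have hX : (Polynomial.X * (1 - Polynomial.X) : ℝ[X]) ≠ 0 := fun h0 => by
    have := congrArg (Polynomial.eval (1 / 2 : ℝ)) h0
    norm_num at this
  have hs : s = 0 := by
    refine (mul_eq_zero.1 (Polynomial.funext fun y => ?_)).resolve_left hX
    simpa [U2divPot, bub2, bub1, eval_toMvPolynomial] using congrArg (eval ![1, y]) h
  have ht : t = 0 := by
    refine (mul_eq_zero.1 (Polynomial.funext fun x => ?_)).resolve_left hX
    simpa [U2divPot, bub2, bub1, eval_toMvPolynomial] using congrArg (eval ![x, 1]) h
  subst hs ht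
  have hXY : (X 0 * (1 - X 0) * X 1 * (1 - X 1) : MvPolynomial (Fin 2) ℝ) ≠ 0 := fun h0 => by
    have := congrArg (eval ![1 / 2, 1 / 2]) h0
    norm_num at this
  refine ⟨(mul_eq_zero.1 ?_).resolve_left hXY, rfl, rfl⟩
  simpa [U2divPot, bub1, bub2] using h

theorem Qsp_eq_bot_of_neg {l m n : ℤ} {κ : ℕ} (hn : n < 0) : Qsp l m n κ = ⊥ := by
  rw [Qsp, Submodule.span_eq_bot]
  rintro f ⟨a, b, c, -, -, hc, -⟩
  omega

theorem differentiableAt_of_mem_Qsp {l m n : ℤ} {κ : ℕ} {χ : ℝ × ℝ × ℝ → ℝ}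
    (hχ : χ ∈ Qsp l m n κ) {q : ℝ × ℝ × ℝ} (hq : 1 + q.2.2 ≠ 0) : DifferentiableAt ℝ χ q := by
  induction hχ using Submodule.span_induction with
  | mem f hf =>
    obtain ⟨a, b, c, -, -, -, rfl⟩ := hf
    unfold qmon
    fun_prop (disch := exact pow_ne_zero _ hq)
  | zero => exact differentiableAt_const 0
  | add f g _ _ hf hg => exact hf.add hg
  | smul r f _ hf => exact hf.const_smul r

theorem exists_polynomial_eq_of_mem_Qsp {l m n : ℤ} {κ : ℕ} {χ : ℝ × ℝ × ℝ → ℝ}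
    (hχ : χ ∈ Qsp l m n κ) :
    ∃ g : (MvPolynomial (Fin 2) ℝ)[X], (∀ c : ℕ, n < c → g.coeff c = 0) ∧
      ∀ q : ℝ × ℝ × ℝ, χ q = (g.map (eval ![q.1, q.2.1])).eval q.2.2 / (1 + q.2.2) ^ κ := by
  induction hχ using Submodule.span_induction with
  | mem f hf =>
    obtain ⟨a, b, c, -, -, hc, rfl⟩ := hf
    refine ⟨Polynomial.monomial c (X 0 ^ a * X 1 ^ b), fun c' hc' => ?_, fun q => ?_⟩
    · rw [Polynomial.coeff_monomial, if_neg (by omega)]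
    · simp [qmon, Polynomial.eval_monomial]
  | zero => exact ⟨0, by simp, by simp⟩
  | add f₁ f₂ _ _ h₁ h₂ =>
    obtain ⟨g₁, hb₁, he₁⟩ := h₁
    obtain ⟨g₂, hb₂, he₂⟩ := h₂
    refine ⟨g₁ + g₂, fun c hc => by simp [hb₁ c hc, hb₂ c hc], fun q => ?_⟩
    simp [he₁ q, he₂ q, add_div]
  | smul r f _ h =>
    obtain ⟨g, hb, he⟩ := h
    refine ⟨Polynomial.C (C r) * g, fun c hc => by simp [hb c hc], fun q => ?_⟩
    simp [he q, mul_div_assoc]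

theorem U2divBounds.eq_zero_of_one {p : MvPolynomial (Fin 2) ℝ} {t s : ℝ[X]}
    (h : U2divBounds 1 p t s) : p = 0 ∧ t = 0 ∧ s = 0 := by
  obtain ⟨hp, ht, hs⟩ := h
  refine ⟨support_eq_empty.1 (Finset.eq_empty_of_forall_notMem fun d hd => ?_),
    Polynomial.support_eq_empty.1 (Finset.eq_empty_of_forall_notMem fun n hn => ?_),
    Polynomial.support_eq_empty.1 (Finset.eq_empty_of_forall_notMem fun n hn => ?_)⟩
  · have := (hp d hd).1; omega
  · have := ht n hn; omega
  · have := hs n hn; omega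

theorem differentiableAt_U2divFun (k : ℕ) (p : MvPolynomial (Fin 2) ℝ) (t s : ℝ[X])
    {χ : ℝ × ℝ × ℝ → ℝ} {q : ℝ × ℝ × ℝ} (hq : 1 + q.2.2 ≠ 0) (hχ : DifferentiableAt ℝ χ q) :
    DifferentiableAt ℝ (U2divFun k p t s χ) q := by
  have hr (f : MvPolynomial (Fin 2) ℝ) := differentiable_eval_vecCons f
  unfold U2divFun
  fun_prop (disch := exact pow_ne_zero _ hq)

theorem div3_U2divFun {m : ℕ} {p : MvPolynomial (Fin 2) ℝ} {t s : ℝ[X]} {χ : ℝ × ℝ × ℝ → ℝ}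
    {γ : ℝ[X]} {x y z : ℝ} (hz : 1 + z ≠ 0) (hχd : DifferentiableAt ℝ χ (x, y, z))
    (hχ : ∀ z, χ (x, y, z) = γ.eval z / (1 + z) ^ (m + 4)) :
    div3 (U2divFun (m + 2) p t s χ) (x, y, z) =
      (divNumerator m (eval ![x, y] (pderiv 0 (pderiv 1 (U2divPot p t s)))) γ).eval z
        / (1 + z) ^ (m + 5) := by
  have h₁ : HasDerivAt (fun x => (U2divFun (m + 2) p t s χ (x, y, z)).1)
      (z ^ (m + 1) / (1 + z) ^ (m + 4) * (eval ![x, y] (pderiv 0 (pderiv 1 (bub2 p)))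
        + 2 * (Polynomial.derivative (bub1 t)).eval x)) x := by
    simp only [U2divFun, Prod.fst_add, Prod.smul_fst, smul_eq_mul, add_zero]
    exact ((hasDerivAt_eval_vecCons_fst _ x y).add
      (((bub1 t).hasDerivAt x).const_mul 2)).const_mul _
  have h₂ : HasDerivAt (fun y => (U2divFun (m + 2) p t s χ (x, y, z)).2.1)
      (z ^ (m + 1) / (1 + z) ^ (m + 4) * (eval ![x, y] (pderiv 0 (pderiv 1 (bub2 p)))
        + 2 * (Polynomial.derivative (bub1 s)).eval y)) y := by
    simp only [U2divFun, Prod.snd_add, Prod.fst_add, Prod.smul_snd, Prod.smul_fst, smul_eq_mul,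
      add_zero]
    rw [pderiv_pderiv_comm]
    exact ((hasDerivAt_eval_vecCons_snd _ x y).add
      (((bub1 s).hasDerivAt y).const_mul 2)).const_mul _
  set a := eval ![x, y] (pderiv 0 (pderiv 1 (U2divPot p t s))) with ha
  have e₃ : (fun z => (U2divFun (m + 2) p t s χ (x, y, z)).2.2) =
      fun z => (Polynomial.X * u3Numerator m a γ).eval z / (1 + z) ^ (m + 4) := by
    ext z'
    simp [U2divFun, hχ, u3Numerator, a, eval_pderiv_pderiv_U2divPot]
    ring
  have h₃ := (Polynomial.X * u3Numerator m a γ).hasDerivAt_eval_div_one_add_pow (m + 4) hz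
  rw [← e₃] at h₃
  rw [div3_eq_of_hasDerivAt (differentiableAt_U2divFun _ p t s hz hχd) h₁ h₂ h₃, divNumerator]
  rw [eval_pderiv_pderiv_U2divPot] at ha
  generalize Polynomial.X * u3Numerator m a γ = N
  simp only [Polynomial.eval_add, Polynomial.eval_sub, Polynomial.eval_mul, Polynomial.eval_C,
    Polynomial.eval_pow, Polynomial.eval_X, Polynomial.eval_one, ha]
  field_simp
  push_cast
  ring

theorem eq_zero_of_div3_U2divFun_eq_zero {m : ℕ} {l l' n : ℤ} (hn : n ≤ m)
    {p : MvPolynomial (Fin 2) ℝ} {t s : ℝ[X]} {χ : ℝ × ℝ × ℝ → ℝ} (hχ : χ ∈ Qsp l l' n (m + 4))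
    (hdiv : ∀ q ∈ PyrInfInt, div3 (U2divFun (m + 2) p t s χ) q = 0) :
    p = 0 ∧ t = 0 ∧ s = 0 ∧ χ = 0 := by
  obtain ⟨g, hg, hχg⟩ := exists_polynomial_eq_of_mem_Qsp hχ
  have hxy : ∀ x ∈ Set.Ioo (0 : ℝ) 1, ∀ y ∈ Set.Ioo (0 : ℝ) 1,
      eval ![x, y] (pderiv 0 (pderiv 1 (U2divPot p t s))) = 0 ∧ g.map (eval ![x, y]) = 0 := by
    intro x hx y hy
    refine eq_zero_of_divNumerator_eq_zero (m := m) (fun c hc => ?_) ?_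
    · rw [Polynomial.coeff_map, hg c (by omega), map_zero]
    refine Polynomial.eq_zero_of_infinite_isRoot _ ((Set.Ioi_infinite 0).mono fun z hz => ?_)
    have hz1 : 1 + z ≠ 0 := by have : (0 : ℝ) < z := hz; positivity
    have h := hdiv (x, y, z) ⟨hx.1, hx.2, hy.1, hy.2, hz⟩
    rw [div3_U2divFun (γ := g.map (eval ![x, y])) hz1 (differentiableAt_of_mem_Qsp hχ hz1)
      (fun z => hχg (x, y, z))] at h
    exact (div_eq_zero_iff.1 h).resolve_right (pow_ne_zero _ hz1)
  have hI := Set.Ioo_infinite (zero_lt_one' ℝ)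
  have hpot := U2divPot_eq_zero_of_pderiv_pderiv
    (eq_zero_of_eval_vecCons_eq_zero hI hI fun x hx y hy => (hxy x hx y hy).1)
  have hg0 : g = 0 := Polynomial.ext fun c => eq_zero_of_eval_vecCons_eq_zero hI hI
    fun x hx y hy => by simpa using congrArg (Polynomial.coeff · c) (hxy x hx y hy).2
  obtain ⟨hp, ht, hs⟩ := eq_zero_of_U2divPot_eq_zero hpot
  exact ⟨hp, ht, hs, funext fun q => by simp [hχg q, hg0]⟩

end U2div

/-- the divergence operator is injective on `U^{(2),k}_{0,div}(Ω∞)`: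
if `div u = 0` on `Ω∞°` for `u = U2divFun k p t̃ s̃ χ` then `u = 0` on `Ω∞°`, and indeed
`p = 0`, `t̃ = 0`, `s̃ = 0` and `χ = 0`. -/
theorem div_injective_on_U2div (k : ℕ) (hk : 1 ≤ k)
    (p : MvPolynomial (Fin 2) ℝ) (t s : Polynomial ℝ) (χ : (ℝ × ℝ × ℝ) → ℝ)
    (hpts : U2divBounds k p t s)
    (hχ : χ ∈ Qsp ((k : ℤ) - 1) ((k : ℤ) - 1) ((k : ℤ) - 2) (k + 2))
    (hdiv : ∀ q ∈ PyrInfInt, div3 (U2divFun k p t s χ) q = 0) :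
    (∀ q ∈ PyrInfInt, U2divFun k p t s χ q = 0) ∧
    p = 0 ∧ t = 0 ∧ s = 0 ∧ χ = 0 := by
  suffices h : p = 0 ∧ t = 0 ∧ s = 0 ∧ χ = 0 by
    obtain ⟨rfl, rfl, rfl, rfl⟩ := h
    exact ⟨fun q _ => by simp [U2divFun, bub1, bub2, Prod.ext_iff], rfl, rfl, rfl, rfl⟩
  rcases Nat.lt_or_ge k 2 with hk2 | hk2
  · obtain rfl : k = 1 := by omega
    obtain ⟨rfl, rfl, rfl⟩ := hpts.eq_zero_of_one
    rw [Qsp_eq_bot_of_neg (by norm_num), Submodule.mem_bot] at hχ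
    exact ⟨rfl, rfl, rfl, hχ⟩
  · obtain ⟨m, rfl⟩ := Nat.exists_eq_add_of_le' hk2
    exact eq_zero_of_div3_U2divFun_eq_zero (by push_cast; omega) hχ hdiv

end
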